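/- (Validity of LB1) Let C be an initial configuration of the BRP and let 𝔅¹ be the set of blocks that are badly placed in C. Then every feasible move sequence for C contains at least |𝔅¹| relocations; that is, f(Fin B) ≥ |𝔅¹|. -/

import Mathlib

/-- A configuration of the BRP: each stack holds a list of blocks, bottom to top. -/
abbrev Config (B S : ℕ) := Fin S → List (Fin B)

/-- Every block occurs exactly once among the stacks. -/
def IsConfig {B S : ℕ} (C : Config B S) : Prop :=
  ∀ b : Fin B, (∑ s : Fin S, (C s).count b) = 1

/-- `a` lies strictly below `b` in stack `s` of `C`. -/
def StrictlyBelow {B S : ℕ} (C : Config B S) (s : Fin S) (a b : Fin B) : Prop :=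
  ∃ i j : ℕ, i < j ∧ (C s)[i]? = some a ∧ (C s)[j]? = some b

/-- A block is badly placed if some smaller-labelled block lies below it in its stack. -/
def BadlyPlaced {B S : ℕ} (C : Config B S) (b : Fin B) : Prop :=
  ∃ s a, a < b ∧ StrictlyBelow C s a b

/-- Moves: retrieve the top block of a stack, or relocate the top block of one
stack onto another stack. -/
inductive Move (S : ℕ) where
  | retrieve (s : Fin S)
  | relocate (src dst : Fin S)

def applyMove {B S : ℕ} (C : Config B S) : Move S → Config B S
  | .retrieve s => Function.update C s (C s).dropLast
  | .relocate src dst =>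
    match (C src).getLast? with
    | some b =>
      let C' := Function.update C src (C src).dropLast
      Function.update C' dst (C' dst ++ [b])
    | none => C

def Enabled {B S : ℕ} (C : Config B S) : Move S → Prop
  | .retrieve s => ∃ b, (C s).getLast? = some b ∧ ∀ (s' : Fin S), ∀ b' ∈ C s', b ≤ b'
  | .relocate src dst => src ≠ dst ∧ C src ≠ []

def play {B S : ℕ} (C : Config B S) : List (Move S) → Config B S
  | [] => C
  | m :: ms => play (applyMove C m) ms

def AllEnabled {B S : ℕ} (C : Config B S) : List (Move S) → Prop
  | [] => True
  | m :: ms => Enabled C m ∧ AllEnabled (applyMove C m) ms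

/-- A feasible move sequence: every move is enabled and at the end all blocks
have been retrieved. -/
def Feasible {B S : ℕ} (C : Config B S) (ms : List (Move S)) : Prop :=
  AllEnabled C ms ∧ ∀ s, play C ms s = []

/-- `b` is the block moved by `m` (a relocation) performed in configuration `C`. -/
def MovedBlock {B S : ℕ} (C : Config B S) (m : Move S) (b : Fin B) : Prop :=
  ∃ src dst, m = .relocate src dst ∧ src ≠ dst ∧ (C src).getLast? = some b

/-- The four types of relocation moves. -/
inductive MType where
  | BB | BG | GB | GG

/-- The relocation `m`, moving block `b` from configuration `C`, has the given type. -/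
def MTypeOf {B S : ℕ} (C : Config B S) (m : Move S) (b : Fin B) : MType → Prop
  | .BB => BadlyPlaced C b ∧ BadlyPlaced (applyMove C m) b
  | .BG => BadlyPlaced C b ∧ ¬ BadlyPlaced (applyMove C m) b
  | .GB => ¬ BadlyPlaced C b ∧ BadlyPlaced (applyMove C m) b
  | .GG => ¬ BadlyPlaced C b ∧ ¬ BadlyPlaced (applyMove C m) b

/-- `m` is a relocation of a block of `𝔅`. -/
def RelocIn {B S : ℕ} (𝔅 : Set (Fin B)) (C : Config B S) (m : Move S) : Prop :=
  ∃ b ∈ 𝔅, MovedBlock C m b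

/-- `m` is a relocation of a block of `𝔅` of type `mt`. -/
def RelocTypeIn {B S : ℕ} (mt : MType) (𝔅 : Set (Fin B)) (C : Config B S) (m : Move S) : Prop :=
  ∃ b ∈ 𝔅, MovedBlock C m b ∧ MTypeOf C m b mt

/-- `m` is a non-BG relocation of a block of `𝔅`. -/
def RelocNonBGIn {B S : ℕ} (𝔅 : Set (Fin B)) (C : Config B S) (m : Move S) : Prop :=
  ∃ b ∈ 𝔅, MovedBlock C m b ∧ ¬ MTypeOf C m b MType.BG

/-- Count the moves of a sequence satisfying `P` (evaluated in the configuration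
in which each move is performed). -/
noncomputable def countMoves {B S : ℕ} (P : Config B S → Move S → Prop) :
    Config B S → List (Move S) → ℕ
  | _, [] => 0
  | C, m :: ms =>
    (@ite ℕ (P C m) (Classical.propDecidable _) 1 0) + countMoves P (applyMove C m) ms

/-- Minimum over feasible move sequences of the number of moves satisfying `P`. -/
noncomputable def fMin {B S : ℕ} (C : Config B S) (P : Config B S → Move S → Prop) : ℕ :=
  sInf { n | ∃ ms, Feasible C ms ∧ countMoves P C ms = n }

/-- `f(𝔅)`: least number of relocations applied to blocks of `𝔅`. -/
noncomputable def fRel {B S : ℕ} (C : Config B S) (𝔅 : Set (Fin B)) : ℕ :=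
  fMin C (RelocIn 𝔅)

/-- `f_mt(𝔅)`: least number of type-`mt` relocations applied to blocks of `𝔅`. -/
noncomputable def fTyp {B S : ℕ} (C : Config B S) (mt : MType) (𝔅 : Set (Fin B)) : ℕ :=
  fMin C (RelocTypeIn mt 𝔅)

/-- `f_nonBG(𝔅)`: least number of non-BG relocations applied to blocks of `𝔅`. -/
noncomputable def fNonBG {B S : ℕ} (C : Config B S) (𝔅 : Set (Fin B)) : ℕ :=
  fMin C (RelocNonBGIn 𝔅)

/-- The top 1st layer: the topmost block of each stack. -/
def TopLayer {B S : ℕ} (C : Config B S) : Set (Fin B) :=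
  {b | ∃ s, (C s).getLast? = some b}

/-- The top `k` layers: the topmost `k` blocks of every stack. -/
def TopK {B S : ℕ} (C : Config B S) (k : ℕ) : Set (Fin B) :=
  {b | ∃ s, b ∈ (C s).drop ((C s).length - k)}

/-- The top `j`-th layer: the `j`-th block from the top of every stack. -/
def TopJth {B S : ℕ} (C : Config B S) (j : ℕ) : Set (Fin B) :=
  {b | ∃ s, (C s)[(C s).length - j]? = some b}

/-- A virtual layer: a set of blocks containing exactly one block from each stack. -/
def VirtualLayer {B S : ℕ} (C : Config B S) (V : Set (Fin B)) : Prop :=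
  ∀ s : Fin S, ∃! b : Fin B, b ∈ V ∧ b ∈ C s

/-- `a` lies at or below the `V`-block of stack `s`. -/
def AtOrBelowLayer {B S : ℕ} (C : Config B S) (V : Set (Fin B)) (s : Fin S) (a : Fin B) : Prop :=
  ∃ b j, b ∈ V ∧ (C s)[j]? = some b ∧ a ∈ (C s).take (j + 1)

/-- `V` is a virtual layer satisfying the conditions of Property 5:
(1) in some stack, a block strictly below the `V`-block of that stack has a smaller
label than every block of `V`; (2) every badly placed block of `V` has a label
strictly greater than the minimum label present in stack `s` after deleting all
blocks strictly above the `V`-block of `s`, for every stack `s`. -/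
def P5 {B S : ℕ} (C : Config B S) (V : Set (Fin B)) : Prop :=
  VirtualLayer C V ∧
  (∃ s a b, b ∈ V ∧ StrictlyBelow C s a b ∧ ∀ c ∈ V, a < c) ∧
  (∀ b ∈ V, BadlyPlaced C b → ∀ s : Fin S, ∃ a, AtOrBelowLayer C V s a ∧ a < b)

/-- A pair of virtual layers `V₁` (upper), `V₂` (lower) with shared well-placed
block `bstar` satisfying the conditions of Property 7. -/
def P7 {B S : ℕ} (C : Config B S) (V₁ V₂ : Set (Fin B)) (bstar : Fin B) : Prop :=
  V₁ ∩ V₂ = {bstar} ∧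
  ¬ BadlyPlaced C bstar ∧
  (∀ s : Fin S, bstar ∉ C s →
    ∃ b₁ b₂, b₁ ∈ V₁ ∧ b₂ ∈ V₂ ∧ StrictlyBelow C s b₂ b₁) ∧
  P5 C V₁ ∧ P5 C V₂ ∧
  (∀ s : Fin S, ∃ a, AtOrBelowLayer C V₁ s a ∧ a ≤ bstar) ∧
  (∃ s : Fin S, ∀ a, AtOrBelowLayer C V₁ s a → bstar ≤ a)

/-- Push blocks one by one onto the indicated stacks. -/
def pushAll {B S : ℕ} (C : Config B S) : List (Fin B × Fin S) → Config B S
  | [] => C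
  | p :: rest => pushAll (Function.update C p.2 (C p.2 ++ [p.1])) rest

/-- The blocks lying strictly above position `i` of stack `s`, listed from the
top of the stack downward (the processing order of the experiment). -/
def aboveList {B S : ℕ} (C : Config B S) (s : Fin S) (i : ℕ) : List (Fin B) :=
  ((C s).drop (i + 1)).reverse

/-- The arrangement resulting from the experiment of Property 4: the blocks above
position `i` of stack `s` are relocated exactly once, from the top downward, onto
the stacks listed in `ds`. -/
def expResult {B S : ℕ} (C : Config B S) (s : Fin S) (i : ℕ) (ds : List (Fin S)) :
    Config B S :=
  pushAll (Function.update C s ((C s).take (i + 1))) ((aboveList C s i).zip ds)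

/-- The condition of Property 4 (target block at position `i` of stack `sStar`):
in every experiment, some relocated block ends badly placed. -/
def P4Cond {B S : ℕ} (C : Config B S) (sStar : Fin S) (i : ℕ) : Prop :=
  ∀ ds : List (Fin S), ds.length = (aboveList C sStar i).length →
    (∀ d ∈ ds, d ≠ sStar) →
    ∃ b ∈ aboveList C sStar i, BadlyPlaced (expResult C sStar i ds) b

/-- The set `𝔅⁴`: the blocks above the target block together with, for each
nonempty stack other than the target's stack, its block of minimum label. -/
def B4Set {B S : ℕ} (C : Config B S) (sStar : Fin S) (i : ℕ) : Set (Fin B) :=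
  {b | b ∈ aboveList C sStar i} ∪
  {b | ∃ s, s ≠ sStar ∧ b ∈ C s ∧ ∀ b' ∈ C s, b ≤ b'}

/-- The number of direct blockages: adjacent pairs in a stack whose upper block
has a strictly larger label. -/
def directBlockages {B S : ℕ} (C : Config B S) : ℕ :=
  ∑ s : Fin S, (((C s).zip (C s).tail).filter (fun p => decide (p.1 < p.2))).length

/-- The number of relocations in a move sequence. -/
def relocCount {S : ℕ} (ms : List (Move S)) : ℕ :=
  (ms.filter (fun m => match m with | Move.relocate _ _ => true | Move.retrieve _ => false)).length

/-- The minimum number of relocations over all feasible move sequences. -/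
noncomputable def fAll {B S : ℕ} (C : Config B S) : ℕ :=
  sInf { n | ∃ ms, Feasible C ms ∧ relocCount ms = n }

/-- `g(L)`: `L` plus the minimum number of direct blockages over all partial
plans with exactly `L` relocations. -/
noncomputable def gIter {B S : ℕ} (C : Config B S) (L : ℕ) : ℕ :=
  L + sInf { d | ∃ ms : List (Move S), AllEnabled C ms ∧ relocCount ms = L ∧
      d = directBlockages (play C ms) }

/-!
A move only extends stacks or removes their top blocks, so a smaller block lying below a badly
placed block `b` stays below it unless `b` itself is moved. A retrieval removes the global
minimum, which is never badly placed; hence retrievals keep every badly placed block badly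
placed and a relocation can repair at most the block it moves. Since no block is left at the
end, every feasible sequence makes at least `|𝔅¹|` relocations. The bound on `f` also needs a
feasible sequence to exist: with two stacks, dig out the minimum onto another stack and
retrieve it.
-/

variable {B S : ℕ}

lemma play_append (C : Config B S) (ms ms' : List (Move S)) :
    play C (ms ++ ms') = play (play C ms) ms' := by
  induction ms generalizing C with
  | nil => rfl
  | cons m ms ih => exact ih _

lemma AllEnabled.append {C : Config B S} {ms ms' : List (Move S)} (h : AllEnabled C ms)
    (h' : AllEnabled (play C ms) ms') : AllEnabled C (ms ++ ms') := by
  induction ms generalizing C with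
  | nil => exact h'
  | cons m ms ih => exact ⟨h.1, ih h.2 h'⟩

section Moves

variable {C : Config B S} {src dst t : Fin S} {x : Fin B}

lemma applyMove_relocate_dst (hne : src ≠ dst) (hx : (C src).getLast? = some x) :
    applyMove C (.relocate src dst) dst = C dst ++ [x] := by
  simp [applyMove, hx, Function.update_of_ne hne.symm]

lemma applyMove_relocate_src (hne : src ≠ dst) (hx : (C src).getLast? = some x) :
    applyMove C (.relocate src dst) src = (C src).dropLast := by
  simp [applyMove, hx, Function.update_of_ne hne]

lemma applyMove_relocate_of_ne (hsrc : t ≠ src) (hdst : t ≠ dst) :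
    applyMove C (.relocate src dst) t = C t := by
  rcases hx : (C src).getLast? with _ | x <;>
    simp [applyMove, hx, Function.update_of_ne hsrc, Function.update_of_ne hdst]

lemma exists_mem_of_mem_applyMove_relocate (hne : src ≠ dst)
    (hb : x ∈ applyMove C (.relocate src dst) t) : ∃ t', x ∈ C t' := by
  rcases hlast : (C src).getLast? with _ | y
  · simp only [applyMove, hlast] at hb
    exact ⟨t, hb⟩
  by_cases htd : t = dst
  · subst htd
    rw [applyMove_relocate_dst hne hlast, List.mem_append, List.mem_singleton] at hb
    rcases hb with hb | rfl
    · exact ⟨t, hb⟩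
    · exact ⟨src, List.mem_of_getLast? hlast⟩
  by_cases hts : t = src
  · subst hts
    rw [applyMove_relocate_src hne hlast] at hb
    exact ⟨t, List.dropLast_subset _ hb⟩
  · exact ⟨t, by rwa [applyMove_relocate_of_ne hts htd] at hb⟩

end Moves

section Placement

variable {C C' : Config B S} {s s' : Fin S} {a b : Fin B}

lemma StrictlyBelow.of_isPrefix (h : StrictlyBelow C s a b) (hpre : C s <+: C' s') :
    StrictlyBelow C' s' a b := by
  obtain ⟨i, j, hij, hi, hj⟩ := h
  have hjlt : j < (C s).length := (List.getElem?_eq_some_iff.mp hj).1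
  rw [List.prefix_iff_eq_take.mp hpre, List.getElem?_take] at hi hj
  exact ⟨i, j, hij, by simpa [hij.trans hjlt] using hi, by simpa [hjlt] using hj⟩

lemma StrictlyBelow.of_eq_dropLast (h : StrictlyBelow C s a b) (hb : (C s).getLast? ≠ some b)
    (hC' : C' s' = (C s).dropLast) : StrictlyBelow C' s' a b := by
  obtain ⟨i, j, hij, hi, hj⟩ := h
  have hjlt : j < (C s).length - 1 := by
    have := (List.getElem?_eq_some_iff.mp hj).1
    refine lt_of_le_of_ne (by omega) fun hj' => hb ?_
    rw [List.getLast?_eq_getElem?, ← hj', hj]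
  refine ⟨i, j, hij, ?_, ?_⟩ <;> rw [hC', List.getElem?_dropLast]
  · simpa [hij.trans hjlt] using hi
  · simpa [hjlt] using hj

lemma BadlyPlaced.of_forall_stack (h : BadlyPlaced C b)
    (hstack : ∀ t, C t <+: C' t ∨ (C' t = (C t).dropLast ∧ (C t).getLast? ≠ some b)) :
    BadlyPlaced C' b := by
  obtain ⟨t, a, hab, hbelow⟩ := h
  refine ⟨t, a, hab, ?_⟩
  rcases hstack t with hpre | ⟨hdrop, hb⟩
  · exact hbelow.of_isPrefix hpre
  · exact hbelow.of_eq_dropLast hb hdrop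

lemma BadlyPlaced.applyMove_retrieve (h : BadlyPlaced C b) (hEn : Enabled C (.retrieve s)) :
    BadlyPlaced (applyMove C (.retrieve s)) b := by
  obtain ⟨r, hr, hmin⟩ := hEn
  have hrb : (C s).getLast? ≠ some b := by
    obtain ⟨t, a, hab, i, j, -, hi, -⟩ := h
    rw [hr]
    rintro ⟨⟩
    exact (hmin t a (List.mem_of_getElem? hi)).not_gt hab
  refine h.of_forall_stack fun t => ?_
  by_cases hts : t = s
  · subst hts
    exact Or.inr ⟨Function.update_self _ _ _, hrb⟩
  · exact Or.inl (by simp [applyMove, Function.update_of_ne hts])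

lemma BadlyPlaced.applyMove_relocate (h : BadlyPlaced C b) (hne : s ≠ s')
    (hb : (C s).getLast? ≠ some b) : BadlyPlaced (applyMove C (.relocate s s')) b := by
  rcases hlast : (C s).getLast? with _ | x
  · simpa [applyMove, hlast] using h
  refine h.of_forall_stack fun t => ?_
  by_cases htd : t = s'
  · subst htd
    exact Or.inl (by rw [applyMove_relocate_dst hne hlast]; exact List.prefix_append _ _)
  by_cases hts : t = s
  · subst hts
    exact Or.inr ⟨applyMove_relocate_src hne hlast, hb⟩
  · exact Or.inl (by rw [applyMove_relocate_of_ne hts htd])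

lemma not_badlyPlaced_of_forall_eq_nil (hC : ∀ s, C s = []) : ¬ BadlyPlaced C b := by
  rintro ⟨s, a, -, i, j, -, -, hj⟩
  simp [hC s] at hj

end Placement

lemma ncard_badlyPlaced_le_countMoves {ms : List (Move S)} {C : Config B S}
    (hms : Feasible C ms) :
    {b | BadlyPlaced C b}.ncard ≤ countMoves (RelocIn (Set.univ : Set (Fin B))) C ms := by
  induction ms generalizing C with
  | nil =>
    have hnone : {b | BadlyPlaced C b} = ∅ :=
      Set.eq_empty_of_forall_notMem fun _ => not_badlyPlaced_of_forall_eq_nil hms.2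
    simp [hnone]
  | cons m ms ih =>
    obtain ⟨⟨hEn, hrest⟩, hend⟩ := hms
    have ih := ih (C := applyMove C m) ⟨hrest, hend⟩
    simp only [countMoves]
    cases m with
    | retrieve s =>
      have hnot : ¬ RelocIn (Set.univ : Set (Fin B)) C (.retrieve s) := by
        rintro ⟨b, -, src, dst, ⟨⟩, -⟩
      rw [if_neg hnot, zero_add]
      exact (Set.ncard_le_ncard (fun b hb => BadlyPlaced.applyMove_retrieve hb hEn)).trans ih
    | relocate src dst =>
      obtain ⟨hne, hnil⟩ := hEn
      set x := (C src).getLast hnil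
      have hx : (C src).getLast? = some x := List.getLast?_eq_some_getLast hnil
      have hrel : RelocIn (Set.univ : Set (Fin B)) C (.relocate src dst) :=
        ⟨x, trivial, src, dst, rfl, hne, hx⟩
      have hsub : {b | BadlyPlaced C b} ⊆
          insert x {b | BadlyPlaced (applyMove C (.relocate src dst)) b} := fun b hb =>
        or_iff_not_imp_left.mpr fun hbx =>
          BadlyPlaced.applyMove_relocate hb hne (by simpa [hx, eq_comm] using hbx)
      calc {b | BadlyPlaced C b}.ncard
          ≤ (insert x {b | BadlyPlaced (applyMove C (.relocate src dst)) b}).ncard :=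
            Set.ncard_le_ncard hsub
        _ ≤ _ + 1 := Set.ncard_insert_le _ _
        _ ≤ _ := by rw [if_pos hrel]; omega

section Feasibility

def numBlocks (C : Config B S) : ℕ := ∑ s, (C s).length

lemma numBlocks_update (C : Config B S) (s : Fin S) (l : List (Fin B)) :
    numBlocks (Function.update C s l) + (C s).length = numBlocks C + l.length := by
  have hupd : numBlocks (Function.update C s l) =
      ∑ t, Function.update (fun t => (C t).length) s l.length t :=
    Finset.sum_congr rfl fun t _ => Function.apply_update (fun _ l => List.length l) C s l t
  rw [hupd, Finset.sum_update_of_mem (Finset.mem_univ s), numBlocks,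
    ← Finset.add_sum_erase _ _ (Finset.mem_univ s), Finset.sdiff_singleton_eq_erase]
  ring

variable {C : Config B S} {s dst : Fin S}

lemma numBlocks_applyMove_retrieve (hnil : C s ≠ []) :
    numBlocks (applyMove C (.retrieve s)) + 1 = numBlocks C := by
  have hupd := numBlocks_update C s (C s).dropLast
  rw [List.length_dropLast] at hupd
  have := List.length_pos_iff.mpr hnil
  change numBlocks (Function.update C s (C s).dropLast) + 1 = _
  omega

lemma numBlocks_applyMove_relocate (hne : s ≠ dst) (hnil : C s ≠ []) :
    numBlocks (applyMove C (.relocate s dst)) = numBlocks C := by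
  have hx := List.getLast?_eq_some_getLast hnil
  have h₁ := numBlocks_update C s (C s).dropLast
  have h₂ := numBlocks_update (Function.update C s (C s).dropLast) dst
    (C dst ++ [(C s).getLast hnil])
  have := List.length_pos_iff.mpr hnil
  simp only [Function.update_of_ne hne.symm, List.length_append, List.length_dropLast,
    List.length_singleton] at h₁ h₂
  simp only [applyMove, hx, Function.update_of_ne hne.symm]
  omega

end Feasibility

/-- Relocating the blocks above the current minimum `m` to another stack, then retrieving `m`. -/
lemma exists_allEnabled_numBlocks_succ (hS : 2 ≤ S) {C : Config B S} {s : Fin S} {m : Fin B}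
    (hm : m ∈ C s) (hmin : ∀ t, ∀ b ∈ C t, m ≤ b) :
    ∃ ms, AllEnabled C ms ∧ numBlocks (play C ms) + 1 = numBlocks C := by
  induction hlen : (C s).length generalizing C with
  | zero => simp_all
  | succ n ih =>
    have hnil : C s ≠ [] := List.ne_nil_of_mem hm
    have hx := List.getLast?_eq_some_getLast hnil
    by_cases htop : (C s).getLast hnil = m
    · rw [htop] at hx
      exact ⟨[.retrieve s], ⟨⟨m, hx, hmin⟩, trivial⟩, numBlocks_applyMove_retrieve hnil⟩
    obtain ⟨dst, hdst⟩ :=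
      Fintype.exists_ne_of_one_lt_card (by rw [Fintype.card_fin]; omega) s
    have hne : s ≠ dst := hdst.symm
    obtain ⟨ms, hms, hnum⟩ := ih (C := applyMove C (.relocate s dst))
      (by rw [applyMove_relocate_src hne hx]
          exact List.mem_dropLast_of_mem_of_ne_getLast hm (Ne.symm htop))
      (fun t b hb => hmin _ _ (exists_mem_of_mem_applyMove_relocate hne hb).choose_spec)
      (by rw [applyMove_relocate_src hne hx, List.length_dropLast, hlen]; rfl)
    exact ⟨.relocate s dst :: ms, ⟨⟨hne, hnil⟩, hms⟩,
      hnum.trans (numBlocks_applyMove_relocate hne hnil)⟩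

lemma exists_feasible (hS : 2 ≤ S) (C : Config B S) : ∃ ms, Feasible C ms := by
  induction hn : numBlocks C generalizing C with
  | zero =>
    refine ⟨[], trivial, fun s => List.length_eq_zero_iff.mp ?_⟩
    exact Finset.sum_eq_zero_iff.mp hn s (Finset.mem_univ s)
  | succ n ih =>
    obtain ⟨s, hs⟩ : ∃ s, C s ≠ [] := by
      by_contra! hempty
      simp [numBlocks, hempty] at hn
    obtain ⟨m, ⟨sm, hm⟩, hmin⟩ := Set.exists_min_image {b | ∃ t, b ∈ C t} id
      (Set.toFinite _) ⟨_, s, List.head_mem hs⟩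
    obtain ⟨ms, hms, hnum⟩ :=
      exists_allEnabled_numBlocks_succ hS hm fun t b hb => hmin b ⟨t, hb⟩
    obtain ⟨ms', hms', hend⟩ := ih (play C ms) (by omega)
    exact ⟨ms ++ ms', hms.append hms', by rwa [play_append]⟩

theorem brp_LB1_general {B S : ℕ} (hS : 2 ≤ S)
    (C : Config B S) :
    (∀ ms, Feasible C ms →
      {b | BadlyPlaced C b}.ncard ≤ countMoves (RelocIn (Set.univ : Set (Fin B))) C ms) ∧
    {b | BadlyPlaced C b}.ncard ≤ fRel C Set.univ := by
  refine ⟨fun ms hms => ncard_badlyPlaced_le_countMoves hms, ?_⟩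
  obtain ⟨ms, hms⟩ := exists_feasible hS C
  exact le_csInf ⟨_, ms, hms, rfl⟩ fun _ ⟨ms, hms, hcount⟩ =>
    hcount ▸ ncard_badlyPlaced_le_countMoves hms

/-- validity of LB1: every feasible move sequence contains at least
`|𝔅¹|` relocations, where `𝔅¹` is the set of badly placed blocks of `C`; that is,
`f(Fin B) ≥ |𝔅¹|`. -/
theorem brp_LB1 {B S : ℕ} (hS : 2 ≤ S) (hB : 1 ≤ B)
    (C : Config B S) (hC : IsConfig C) :
    (∀ ms, Feasible C ms →
      {b | BadlyPlaced C b}.ncard ≤ countMoves (RelocIn (Set.univ : Set (Fin B))) C ms) ∧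
    {b | BadlyPlaced C b}.ncard ≤ fRel C Set.univ :=
  brp_LB1_general hS C
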